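/- Let w : ℤ → ℝ → ℝ be a family of differentiable functions satisfying for all n ∈ ℤ and t ∈ ℝ the equation ẇ_n = w_n (w_n + 1)(w_{n+2} w_{n+1} − w_{n−1} w_{n−2}). Define u_n(t) = (w_{n+2}(t) + 1) w_{n+1}(t) w_n(t). Then for all n ∈ ℤ and t ∈ ℝ, u̇_n = u_n (u_{n+2} + u_{n+1} − u_{n−1} − u_{n−2}), i.e., the Miura-type transformation u_n = (w_{n+2} + 1) w_{n+1} w_n maps solutions of the modified equation to solutions of the INB equation. -/

import Mathlib

/-!
Both sides of the claimed equation are polynomials in `w_{n-2}, …, w_{n+4}`: the product rule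
expresses `u̇_n` through `ẇ_n, ẇ_{n+1}, ẇ_{n+2}`, the modified equation replaces these by
polynomials in the `w_k`, and the resulting polynomial identity is checked by `ring`.
-/

namespace Miura

def modifiedField (x : ℤ → ℝ) (n : ℤ) : ℝ :=
  x n * (x n + 1) * (x (n + 2) * x (n + 1) - x (n - 1) * x (n - 2))

def inbField (x : ℤ → ℝ) (n : ℤ) : ℝ :=
  x n * (x (n + 2) + x (n + 1) - x (n - 1) - x (n - 2))

def miuraMap (x : ℤ → ℝ) (n : ℤ) : ℝ :=
  (x (n + 2) + 1) * x (n + 1) * x n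

theorem miuraMap_leibniz_eq_inbField (x : ℤ → ℝ) (n : ℤ) :
    modifiedField x (n + 2) * x (n + 1) * x n + (x (n + 2) + 1) * modifiedField x (n + 1) * x n
      + (x (n + 2) + 1) * x (n + 1) * modifiedField x n = inbField (miuraMap x) n := by
  simp only [modifiedField, inbField, miuraMap]
  -- `ring_nf` also normalizes the indices, identifying e.g. `x (n + 2 + 2)` with `x (n + 4)`.
  ring_nf

theorem hasDerivAt_miuraMap {w : ℤ → ℝ → ℝ} {t : ℝ}
    (hw : ∀ n, HasDerivAt (w n) (modifiedField (w · t) n) t) (n : ℤ) :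
    HasDerivAt (fun s => miuraMap (w · s) n) (inbField (miuraMap (w · t)) n) t := by
  refine ((((hw (n + 2)).add_const 1).mul (hw (n + 1))).mul (hw n)).congr_deriv ?_
  rw [← miuraMap_leibniz_eq_inbField]
  simp only [Pi.mul_apply]
  ring

end Miura

open Miura in
/-- Equation `ẇₙ = wₙ(wₙ+1)(w_{n+2}w_{n+1} − w_{n−1}w_{n−2})` is transformed into the
INB equation by the Miura-type transformation `uₙ = (w_{n+2} + 1) w_{n+1} wₙ`. -/
theorem stmt_10 (w : ℤ → ℝ → ℝ)
    (hw : ∀ (n : ℤ) (t : ℝ), HasDerivAt (w n)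
      (w n t * (w n t + 1) * (w (n + 2) t * w (n + 1) t - w (n - 1) t * w (n - 2) t)) t)
    (u : ℤ → ℝ → ℝ)
    (hu : ∀ (n : ℤ) (t : ℝ), u n t = (w (n + 2) t + 1) * w (n + 1) t * w n t) :
    ∀ (n : ℤ) (t : ℝ), HasDerivAt (u n)
      (u n t * (u (n + 2) t + u (n + 1) t - u (n - 1) t - u (n - 2) t)) t := by
  have hu' : u = fun n t => miuraMap (w · t) n := funext₂ hu
  intro n t
  subst hu'
  exact hasDerivAt_miuraMap (fun n => hw n t) n
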